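/- Let μ, α, β ≥ 0 with μ + α + β = 1, and let λ1, λ2, λ3 be barycentric coordinates of a triangle E (cyclic indexing). For every x ∈ E (where all λi(x) ∈ [0,1]), the weight ω(x) = Σ_{j=1}^{3} (1 − λj(x))^μ (λ_{j+1}(x))^α (λ_{j+2}(x))^β satisfies ω(x) ≤ μ + 1. -/

import Mathlib

open MeasureTheory Real Set Finset

noncomputable section

/-- 2D cross product. -/
def cross (a b : ℝ × ℝ) : ℝ := a.1 * b.2 - a.2 * b.1

/-- Barycentric coordinates of the triangle with vertices v1, v2, v3. -/
def bary (v1 v2 v3 : ℝ × ℝ) : Fin 3 → ℝ × ℝ → ℝ :=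
  ![fun x => cross (x - v3) (v2 - v3) / cross (v1 - v3) (v2 - v3),
    fun x => cross (x - v3) (v3 - v1) / cross (v1 - v3) (v2 - v3),
    fun x => cross (x - v1) (v1 - v2) / cross (v1 - v3) (v2 - v3)]

/-- The vertices, indexed cyclically by `Fin 3`. -/
def vert (v1 v2 v3 : ℝ × ℝ) : Fin 3 → ℝ × ℝ := ![v1, v2, v3]


/-- The weight function ω_{μ,α,β}. -/
def weight (v1 v2 v3 : ℝ × ℝ) (μ a b : ℝ) (x : ℝ × ℝ) : ℝ :=
  ∑ j : Fin 3, (1 - bary v1 v2 v3 j x) ^ μ *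
    (bary v1 v2 v3 (j + 1) x) ^ a * (bary v1 v2 v3 (j + 2) x) ^ b

/-- Bound for the weight function on the triangle when μ + α + β = 1. -/
theorem weight_le_mu_add_one (v1 v2 v3 : ℝ × ℝ)
    (hE : cross (v1 - v3) (v2 - v3) ≠ 0)
    (μ a b : ℝ) (hμ : 0 ≤ μ) (ha : 0 ≤ a) (hb : 0 ≤ b)
    (hsum : μ + a + b = 1) (x : ℝ × ℝ)
    (hx : ∀ i : Fin 3, bary v1 v2 v3 i x ∈ Set.Icc (0:ℝ) 1) :
    weight v1 v2 v3 μ a b x ≤ μ + 1 := by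
  have h0 := hx 0
  have h1 := hx 1
  have h2 := hx 2
  simp only [Set.mem_Icc] at h0 h1 h2
  -- sum of barycentric coordinates is 1
  have hS : bary v1 v2 v3 0 x + bary v1 v2 v3 1 x + bary v1 v2 v3 2 x = 1 := by
    simp only [bary, cross, Matrix.cons_val_zero, Matrix.cons_val_one, Matrix.head_cons,
      Matrix.cons_val_two, Matrix.tail_cons, Prod.fst_sub, Prod.snd_sub]
    rw [← add_div, ← add_div, div_eq_one_iff_eq (by simpa [cross] using hE)]
    ring
  have key : ∀ p1 p2 p3 : ℝ, 0 ≤ p1 → p2 ≤ 1 → 0 ≤ p2 → 0 ≤ p3 →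
      (1 - p2) ^ μ * p3 ^ a * p1 ^ b ≤ μ * (1 - p2) + a * p3 + b * p1 := by
    intro p1 p2 p3 hp1 hp2 hp2' hp3
    exact Real.geom_mean_le_arith_mean3_weighted hμ ha hb (by linarith) hp3 hp1 hsum
  have k0 := key (bary v1 v2 v3 2 x) (bary v1 v2 v3 0 x) (bary v1 v2 v3 1 x)
    h2.1 h0.2 h0.1 h1.1
  have k1 := key (bary v1 v2 v3 0 x) (bary v1 v2 v3 1 x) (bary v1 v2 v3 2 x)
    h0.1 h1.2 h1.1 h2.1
  have k2 := key (bary v1 v2 v3 1 x) (bary v1 v2 v3 2 x) (bary v1 v2 v3 0 x)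
    h1.1 h2.2 h2.1 h0.1
  have hw : weight v1 v2 v3 μ a b x =
      (1 - bary v1 v2 v3 0 x) ^ μ * (bary v1 v2 v3 1 x) ^ a * (bary v1 v2 v3 2 x) ^ b +
      (1 - bary v1 v2 v3 1 x) ^ μ * (bary v1 v2 v3 2 x) ^ a * (bary v1 v2 v3 0 x) ^ b +
      (1 - bary v1 v2 v3 2 x) ^ μ * (bary v1 v2 v3 0 x) ^ a * (bary v1 v2 v3 1 x) ^ b := by
    simp [weight, Fin.sum_univ_three]
  rw [hw]
  nlinarith [k0, k1, k2, hS]
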